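/- HyperPDL-Δ subsumes the until operator: for the translation tr(φ₁ U φ₂) := ⟨(tr(φ₁)? · •)^*⟩ tr(φ₂) (where • is the all-wildcard tuple), a path assignment Π satisfies ⟨(ψ₁? · •)^*⟩ ψ₂ if and only if there exists i ≥ 0 such that Π[2i, ∞] ⊨ ψ₂ and for all 0 ≤ j < i, Π[2j, ∞] ⊨ ψ₁. -/

import Mathlib

/-- A trace: an infinite alternating sequence of labels (sets of atomic propositions)
and atomic programs; `lab j` is the label at step `j`, `act j` the atomic program
between steps `j` and `j+1`. -/
structure Trace (AP P : Type) where
  lab : ℕ → Set AP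
  act : ℕ → P

/-- The suffix of a trace starting after `j` steps. -/
def Trace.drop {AP P : Type} (t : Trace AP P) (j : ℕ) : Trace AP P :=
  ⟨fun m => t.lab (j + m), fun m => t.act (j + m)⟩

/-- The shifted trace assignment. -/
def TAdrop {AP P : Type} {n : ℕ} (Pa : Fin n → Trace AP P) (j : ℕ) : Fin n → Trace AP P :=
  fun l => (Pa l).drop j

mutual
/-- Quantifier-free HyperPDL-Δ formulas over `n` path variables. -/
inductive QF (AP P : Type) (n : ℕ) : Type
  | atom (a : AP) (l : Fin n) : QF AP P n
  | not (φ : QF AP P n) : QF AP P n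
  | and (φ ψ : QF AP P n) : QF AP P n
  | or (φ ψ : QF AP P n) : QF AP P n
  | dia (α : Pg AP P n) (φ : QF AP P n) : QF AP P n
  | box (α : Pg AP P n) (φ : QF AP P n) : QF AP P n
  | delta (α : Pg AP P n) : QF AP P n

/-- Programs of HyperPDL-Δ (with `none` as the wildcard coordinate). -/
inductive Pg (AP P : Type) (n : ℕ) : Type
  | atom (t : Fin n → Option P) : Pg AP P n
  | eps : Pg AP P n
  | sum (a b : Pg AP P n) : Pg AP P n
  | seq (a b : Pg AP P n) : Pg AP P n
  | star (a : Pg AP P n) : Pg AP P n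
  | test (φ : QF AP P n) : Pg AP P n
end

mutual
/-- Satisfaction of a quantifier-free formula by a trace assignment. -/
def QF.Sat {AP P : Type} {n : ℕ} : QF AP P n → (Fin n → Trace AP P) → Prop
  | .atom a l, Pa => a ∈ (Pa l).lab 0
  | .not φ, Pa => ¬ φ.Sat Pa
  | .and φ ψ, Pa => φ.Sat Pa ∧ ψ.Sat Pa
  | .or φ ψ, Pa => φ.Sat Pa ∨ ψ.Sat Pa
  | .dia α φ, Pa => ∃ j, α.Rel Pa 0 j ∧ φ.Sat (TAdrop Pa j)
  | .box α φ, Pa => ∀ j, α.Rel Pa 0 j → φ.Sat (TAdrop Pa j)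
  | .delta α, Pa => ∃ k : ℕ → ℕ, k 0 = 0 ∧ (∀ i, k i ≤ k (i + 1)) ∧
      ∀ i, α.Rel Pa (k i) (k (i + 1))

/-- The relation `(Π, i, k) ∈ R(α)` (indices count steps). -/
def Pg.Rel {AP P : Type} {n : ℕ} : Pg AP P n → (Fin n → Trace AP P) → ℕ → ℕ → Prop
  | .atom t, Pa, i, k => k = i + 1 ∧ ∀ l, t l = none ∨ t l = some ((Pa l).act i)
  | .eps, _, i, k => i = k
  | .sum a b, Pa, i, k => a.Rel Pa i k ∨ b.Rel Pa i k
  | .seq a b, Pa, i, k => ∃ j, i ≤ j ∧ j ≤ k ∧ a.Rel Pa i j ∧ b.Rel Pa j k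
  | .star a, Pa, i, k => ∃ (m : ℕ) (js : Fin (m + 1) → ℕ), js 0 = i ∧ js (Fin.last m) = k ∧
      ∀ l : Fin m, js l.castSucc ≤ js l.succ ∧ a.Rel Pa (js l.castSucc) (js l.succ)
  | .test φ, Pa, i, k => i = k ∧ φ.Sat (TAdrop Pa i)
end

/-- The all-wildcard tuple program `•`. -/
def bullet {AP P : Type} {n : ℕ} : Pg AP P n := .atom fun _ => none

/-! A run of `(ψ₁? · •)^*` can only advance one step per iteration, checking `ψ₁` at the position
it leaves; so its chain of positions from `i` is forced to be `i, i + 1, …, k`, and the run exists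
exactly when `ψ₁` holds on `[i, k)`. -/

namespace Pg

variable {AP P : Type} {n : ℕ}

theorem rel_bullet {Pa : Fin n → Trace AP P} {i k : ℕ} :
    (bullet : Pg AP P n).Rel Pa i k ↔ k = i + 1 := by
  simp [bullet, Pg.Rel]

theorem rel_test_seq_bullet {φ : QF AP P n} {Pa : Fin n → Trace AP P} {i k : ℕ} :
    (seq (test φ) bullet).Rel Pa i k ↔ k = i + 1 ∧ φ.Sat (TAdrop Pa i) := by
  simp only [Pg.Rel, rel_bullet]
  constructor
  · rintro ⟨j, -, -, ⟨rfl, hφ⟩, rfl⟩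
    exact ⟨rfl, hφ⟩
  · rintro ⟨rfl, hφ⟩
    exact ⟨i, le_rfl, by omega, ⟨rfl, hφ⟩, rfl⟩

theorem rel_star_of_rel_iff_succ {α : Pg AP P n} {Pa : Fin n → Trace AP P} {p : ℕ → Prop}
    (hα : ∀ i k, α.Rel Pa i k ↔ k = i + 1 ∧ p i) {i k : ℕ} :
    (star α).Rel Pa i k ↔ i ≤ k ∧ ∀ j, i ≤ j → j < k → p j := by
  constructor
  · rintro ⟨m, js, hjs0, rfl, hstep⟩
    have hjs : ∀ l : Fin (m + 1), js l = i + l := by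
      intro l
      induction l using Fin.induction with
      | zero => simpa using hjs0
      | succ l ih => simp [((hα _ _).1 (hstep l).2).1, ih, add_assoc]
    refine ⟨by simp [hjs], fun j hij hjk => ?_⟩
    have hl : j - i < m := by rw [hjs, Fin.val_last] at hjk; omega
    have hp := ((hα _ _).1 (hstep ⟨j - i, hl⟩).2).2
    rwa [hjs, Fin.val_castSucc, Nat.add_sub_cancel' hij] at hp
  · rintro ⟨hik, hp⟩
    refine ⟨k - i, fun l => i + l, by simp, by simp [hik], fun l => ?_⟩
    simp only [Fin.val_castSucc, Fin.val_succ]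
    exact ⟨by omega, (hα _ _).2 ⟨by omega, hp _ (by omega) (by omega)⟩⟩

end Pg

/-- **HyperPDL-Δ expresses Until**: `⟨(ψ₁? · •)^*⟩ ψ₂` holds at `Π` iff there is an
`i ≥ 0` such that `ψ₂` holds at the suffix after `i` steps (paper position `2i`) and `ψ₁`
holds at all earlier suffixes. -/
theorem dia_star_test_bullet_iff_until {AP P : Type} {n : ℕ}
    (ψ1 ψ2 : QF AP P n) (Pa : Fin n → Trace AP P) :
    (QF.dia (.star (.seq (.test ψ1) bullet)) ψ2).Sat Pa ↔
      ∃ i, ψ2.Sat (TAdrop Pa i) ∧ ∀ j < i, ψ1.Sat (TAdrop Pa j) := by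
  simp only [QF.Sat, Pg.rel_star_of_rel_iff_succ (fun _ _ => Pg.rel_test_seq_bullet), zero_le,
    true_and, true_imp_iff]
  exact exists_congr fun i => and_comm
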